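/- If a density matrix ρ on H_A⊗H_B is separable, then it satisfies the reduction criterion: 1⊗ρ_B − ρ ≥ 0 and ρ_A⊗1 − ρ ≥ 0, where ρ_A, ρ_B are the partial traces of ρ. -/

import Mathlib

open Matrix Kronecker
open scoped ComplexOrder

def SepState {nA nB : Type*} [Fintype nA] [Fintype nB]
    (ρ : Matrix (nA × nB) (nA × nB) ℂ) : Prop :=
  ∃ (k : ℕ) (p : Fin k → ℝ) (a : Fin k → nA → ℂ) (b : Fin k → nB → ℂ),
    (∀ i, 0 ≤ p i) ∧ (∑ i, p i = 1) ∧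
    (∀ i, ∑ x, ‖a i x‖ ^ 2 = 1) ∧ (∀ i, ∑ x, ‖b i x‖ ^ 2 = 1) ∧
    ρ = ∑ i, (p i : ℂ) •
      (vecMulVec (a i) (star (a i)) ⊗ₖ vecMulVec (b i) (star (b i)))

/-- Partial trace over the B factor: `ρ_A = Tr_B ρ`. -/
noncomputable def ptraceB {nA nB : Type*} [Fintype nB] (ρ : Matrix (nA × nB) (nA × nB) ℂ) :
    Matrix nA nA ℂ := fun i j => ∑ k, ρ (i, k) (j, k)

/-- Partial trace over the A factor: `ρ_B = Tr_A ρ`. -/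
noncomputable def ptraceA {nA nB : Type*} [Fintype nA] (ρ : Matrix (nA × nB) (nA × nB) ℂ) :
    Matrix nB nB ℂ := fun k l => ∑ i, ρ (i, k) (i, l)

section Aux
variable {m n : Type*} [Fintype m] [Fintype n]

omit [Fintype m] [Fintype n] in
lemma kron_conjTranspose' (A : Matrix m m ℂ) (B : Matrix n n ℂ) :
    (A ⊗ₖ B)ᴴ = Aᴴ ⊗ₖ Bᴴ := by
  ext ⟨i, k⟩ ⟨j, l⟩
  simp [conjTranspose_apply, kroneckerMap_apply]

lemma psd_kron {A : Matrix m m ℂ} {B : Matrix n n ℂ}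
    (hA : A.PosSemidef) (hB : B.PosSemidef) : (A ⊗ₖ B).PosSemidef := by
  exact hA.kronecker hB

lemma psd_real_smul {A : Matrix n n ℂ} (hA : A.PosSemidef) {c : ℝ} (hc : 0 ≤ c) :
    ((c : ℂ) • A).PosSemidef := by
  exact hA.smul (Complex.zero_le_real.mpr hc)

lemma psd_vecMulVec (a : n → ℂ) : (vecMulVec a (star a)).PosSemidef := by
  have : vecMulVec a (star a) = (replicateRow Unit (star a))ᴴ * replicateRow Unit (star a) := by
    rw [conjTranspose_replicateRow, star_star, ← vecMulVec_eq]
  rw [this]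
  exact posSemidef_conjTranspose_mul_self _

lemma sum_mul_conj (a : n → ℂ) (h : ∑ x, ‖a x‖ ^ 2 = 1) :
    ∑ x, a x * star (a x) = (1 : ℂ) := by
  have : ∀ x, a x * star (a x) = ((‖a x‖ ^ 2 : ℝ) : ℂ) := fun x => by
    rw [RCLike.star_def, RCLike.mul_conj]; norm_cast
  simp_rw [this, ← Complex.ofReal_sum, h, Complex.ofReal_one]

lemma psd_one_sub_proj [DecidableEq n] (a : n → ℂ) (h : ∑ x, ‖a x‖ ^ 2 = 1) :
    ((1 : Matrix n n ℂ) - vecMulVec a (star a)).PosSemidef := by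
  classical
  set P := vecMulVec a (star a) with hP
  have hHerm : Pᴴ = P := by
    ext i j
    simp [hP, conjTranspose_apply, vecMulVec_apply, mul_comm]
  have hP2 : P * P = P := by
    ext i j
    simp only [hP, mul_apply, vecMulVec_apply, Pi.star_apply]
    have : ∀ k, a i * star (a k) * (a k * star (a j)) =
        (a k * star (a k)) * (a i * star (a j)) := fun k => by ring
    simp_rw [this, ← Finset.sum_mul, sum_mul_conj a h, one_mul]
  suffices e : 1 - P = (1 - P)ᴴ * (1 - P) by
    rw [e]; exact posSemidef_conjTranspose_mul_self _
  rw [conjTranspose_sub, conjTranspose_one, hHerm, sub_mul, mul_sub, mul_sub, hP2]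
  simp

lemma psd_sum {k : ℕ} (M : Fin k → Matrix n n ℂ) (h : ∀ i, (M i).PosSemidef) :
    (∑ i, M i).PosSemidef := by
  classical
  induction' (Finset.univ : Finset (Fin k)) using Finset.induction with i s hi ih
  · simpa using Matrix.PosSemidef.zero
  · rw [Finset.sum_insert hi]
    exact (h i).add ih

end Aux

/-- Separable density matrices satisfy the reduction criterion:
`1 ⊗ ρ_B − ρ ≥ 0` and `ρ_A ⊗ 1 − ρ ≥ 0`. -/
theorem stmt7 {nA nB : Type*} [Fintype nA] [Fintype nB] [DecidableEq nA] [DecidableEq nB]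
    (ρ : Matrix (nA × nB) (nA × nB) ℂ) (hρ : ρ.PosSemidef) (htr : ρ.trace = 1)
    (hsep : SepState ρ) :
    ((1 : Matrix nA nA ℂ) ⊗ₖ ptraceA ρ - ρ).PosSemidef ∧
    (ptraceB ρ ⊗ₖ (1 : Matrix nB nB ℂ) - ρ).PosSemidef := by
  obtain ⟨K, p, a, b, hp, hpsum, ha, hb, hdecomp⟩ := hsep
  have hpA : ptraceA ρ = ∑ i, (p i : ℂ) • vecMulVec (b i) (star (b i)) := by
    ext s t
    simp only [ptraceA, hdecomp, Matrix.sum_apply, Matrix.smul_apply, kroneckerMap_apply,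
      vecMulVec_apply, smul_eq_mul, Pi.star_apply]
    rw [Finset.sum_comm]
    refine Finset.sum_congr rfl fun i _ => ?_
    rw [← Finset.mul_sum, ← Finset.sum_mul, sum_mul_conj (a i) (ha i), one_mul]
  have hpB : ptraceB ρ = ∑ i, (p i : ℂ) • vecMulVec (a i) (star (a i)) := by
    ext s t
    simp only [ptraceB, hdecomp, Matrix.sum_apply, Matrix.smul_apply, kroneckerMap_apply,
      vecMulVec_apply, smul_eq_mul, Pi.star_apply]
    rw [Finset.sum_comm]
    refine Finset.sum_congr rfl fun i _ => ?_
    rw [← Finset.mul_sum, ← Finset.mul_sum, sum_mul_conj (b i) (hb i), mul_one]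
  constructor
  · have key : (1 : Matrix nA nA ℂ) ⊗ₖ ptraceA ρ - ρ =
        ∑ i, (p i : ℂ) • (((1 : Matrix nA nA ℂ) - vecMulVec (a i) (star (a i)))
          ⊗ₖ vecMulVec (b i) (star (b i))) := by
      rw [hpA, hdecomp]
      ext ⟨s, x⟩ ⟨t, y⟩
      simp only [Matrix.sub_apply, Matrix.sum_apply, Matrix.smul_apply, kroneckerMap_apply,
        vecMulVec_apply, smul_eq_mul, Pi.star_apply]
      rw [Finset.mul_sum, ← Finset.sum_sub_distrib]
      refine Finset.sum_congr rfl fun i _ => by ring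
    rw [key]
    exact psd_sum _ fun i => psd_real_smul
      (psd_kron (psd_one_sub_proj (a i) (ha i)) (psd_vecMulVec (b i))) (hp i)
  · have key : ptraceB ρ ⊗ₖ (1 : Matrix nB nB ℂ) - ρ =
        ∑ i, (p i : ℂ) • (vecMulVec (a i) (star (a i))
          ⊗ₖ ((1 : Matrix nB nB ℂ) - vecMulVec (b i) (star (b i)))) := by
      rw [hpB, hdecomp]
      ext ⟨s, x⟩ ⟨t, y⟩
      simp only [Matrix.sub_apply, Matrix.sum_apply, Matrix.smul_apply, kroneckerMap_apply,
        vecMulVec_apply, smul_eq_mul, Pi.star_apply]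
      rw [Finset.sum_mul, ← Finset.sum_sub_distrib]
      refine Finset.sum_congr rfl fun i _ => by ring
    rw [key]
    exact psd_sum _ fun i => psd_real_smul
      (psd_kron (psd_vecMulVec (a i)) (psd_one_sub_proj (b i) (hb i))) (hp i)
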